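/- Let (X,Y) be a pair of real-valued random variables whose joint distribution is discrete with probability mass function h(x,y) = Pr(X = x, Y = y). For x with Pr(X = x) > 0, let K(x,·) denote the conditional distribution of Y given X = x, i.e. K(x,B) = Pr(Y ∈ B, X = x)/Pr(X = x). Then the following are equivalent: (i) for arbitrary real numbers x1 < x2 with Pr(X = x1) > 0 and Pr(X = x2) > 0, K(x1,·) ≤_lr K(x2,·); (ii) h is totally positive of order two, i.e. h(x2,y1)·h(x1,y2) ≤ h(x1,y1)·h(x2,y2) for all x1 < x2 and y1 < y2. -/

import Mathlib

/-!
Write `Qᵢ = K(xᵢ, ·)` and `cᵢ = Pr(X = xᵢ)`, so that `Qᵢ {y} = h(xᵢ, y) / cᵢ`; after cancelling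
`c₁ c₂`, total positivity is the cross inequality `Q₂ {y₁} Q₁ {y₂} ≤ Q₁ {y₁} Q₂ {y₂}` for
`y₁ < y₂`. Densities `gᵢ` of `Qᵢ` with respect to any `μ` satisfy `Qᵢ {y} = gᵢ y * μ {y}`, so a
nondecreasing ratio `g₂ / g₁` yields the cross inequality after multiplying by `μ {y₁} μ {y₂}`.
Conversely, as the `Qᵢ` live on a countable set, `y ↦ Qᵢ {y} / μ {y}` is a density with respect
to `μ = Q₁ + Q₂`, and the ratio of these densities is `Q₂ {y} / Q₁ {y}`, which the cross
inequality makes nondecreasing.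
-/

open MeasureTheory Set Filter

noncomputable section

/-- `g` is a (measurable, nonnegative) density of `Q` with respect to `μ`,
i.e. `Q B = ∫_B g dμ` for all Borel sets `B`. -/
def IsDensity (Q μ : Measure ℝ) (g : ℝ → ENNReal) : Prop :=
  Measurable g ∧ ∀ B : Set ℝ, MeasurableSet B → Q B = ∫⁻ x in B, g x ∂μ

/-- Likelihood ratio order `Q1 ≤_lr Q2`: there exist a σ-finite measure `μ` and densities
`g1 = dQ1/dμ`, `g2 = dQ2/dμ` such that the ratio `g2/g1` (with values in `[0,∞]`)
is nondecreasing on the set `{g1 + g2 > 0}`. -/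
def LikelihoodRatioLE (Q1 Q2 : Measure ℝ) : Prop :=
  ∃ (μ : Measure ℝ) (g1 g2 : ℝ → ENNReal), SigmaFinite μ ∧
    IsDensity Q1 μ g1 ∧ IsDensity Q2 μ g2 ∧
    ∀ x y : ℝ, x ≤ y → 0 < g1 x + g2 x → 0 < g1 y + g2 y →
      g2 x / g1 x ≤ g2 y / g1 y

/-- The conditional distribution of `Y` given `X = x`,
i.e. the measure `B ↦ R({x} × B) / R({x} × ℝ)`. -/
def condDist (R : Measure (ℝ × ℝ)) (x : ℝ) : Measure ℝ :=
  (R ({x} ×ˢ (univ : Set ℝ)))⁻¹ • (R.restrict ({x} ×ˢ (univ : Set ℝ))).map Prod.snd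

open scoped ENNReal

namespace ENNReal

variable {a b c d : ℝ≥0∞}

theorem div_le_div_iff_mul_le_mul (hb : b ≠ ∞) (hc : c ≠ ∞) (hd : d ≠ ∞) (hcd : c ≠ 0 ∨ d ≠ 0) :
    a / b ≤ c / d ↔ a * d ≤ b * c := by
  rcases eq_or_ne d 0 with rfl | hd0
  · simp [ENNReal.div_zero (by simpa using hcd)]
  rcases eq_or_ne b 0 with rfl | hb0
  · rcases eq_or_ne a 0 with rfl | ha0
    · simp
    · simp [ENNReal.div_zero ha0, ha0, hd0, ENNReal.div_ne_top hc hd0]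
  have hl : a / b * (b * d) = a * d := by
    rw [← mul_assoc, ENNReal.div_mul_cancel hb0 hb]
  have hr : c / d * (b * d) = b * c := by
    rw [mul_left_comm, ENNReal.div_mul_cancel hd0 hd]
  rw [← ENNReal.mul_le_mul_iff_left (mul_ne_zero hb0 hd0) (ENNReal.mul_ne_top hb hd), hl, hr]

theorem div_div_div_cancel_right (hc : c ≠ 0) (hc' : c ≠ ∞) : a / c / (b / c) = a / b := by
  rw [div_eq_mul_inv a, div_eq_mul_inv b,
    ENNReal.mul_div_mul_right _ _ (ENNReal.inv_ne_zero.2 hc') (ENNReal.inv_ne_top.2 hc)]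

end ENNReal

theorem IsDensity.measure_singleton {Q μ : Measure ℝ} {g : ℝ → ℝ≥0∞} (hg : IsDensity Q μ g)
    (y : ℝ) : Q {y} = g y * μ {y} := by
  rw [hg.2 {y} (measurableSet_singleton y), lintegral_singleton]

theorem IsDensity.ne_top {Q μ : Measure ℝ} [IsFiniteMeasure Q] {g : ℝ → ℝ≥0∞}
    (hg : IsDensity Q μ g) {y : ℝ} (hy : μ {y} ≠ 0) : g y ≠ ∞ := by
  intro htop
  have hQ := hg.measure_singleton y
  rw [htop, ENNReal.top_mul hy] at hQ
  exact measure_ne_top Q {y} hQ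

theorem isDensity_div_measure_singleton {Q μ : Measure ℝ} [IsFiniteMeasure μ] {T : Set ℝ}
    (hT : T.Countable) (hQT : Q Tᶜ = 0) (hQμ : Q ≪ μ) :
    IsDensity Q μ (fun y => Q {y} / μ {y}) := by
  set g : ℝ → ℝ≥0∞ := fun y => Q {y} / μ {y}
  have hg : g.support ⊆ T := by
    intro y hy
    by_contra hyT
    exact hy (by simp [g, measure_mono_null (singleton_subset_iff.2 hyT) hQT])
  have hmass : ∀ y, g y * μ {y} = Q {y} := fun y => by
    rcases eq_or_ne (μ {y}) 0 with h | h
    · simp [g, h, hQμ h]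
    · exact ENNReal.div_mul_cancel h (measure_ne_top μ _)
  refine ⟨measurable_const.measurable_of_countable_ne (hT.mono fun y hy => hg (Ne.symm hy)),
    fun B hB => ?_⟩
  have hBT : (B ∩ T).Countable := hT.mono inter_subset_right
  calc Q B = ∫⁻ _ in B ∩ T, 1 ∂Q := by rw [setLIntegral_one, measure_inter_conull hQT]
    _ = ∫⁻ y in B ∩ T, g y ∂μ := by simp only [lintegral_countable _ hBT, hmass, one_mul]
    _ = ∫⁻ y in B, g y ∂μ := by
      rw [inter_comm, ← Measure.restrict_restrict hT.measurableSet]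
      exact setLIntegral_eq_of_support_subset hg

theorem LikelihoodRatioLE.measure_singleton_mul_le {Q1 Q2 : Measure ℝ} [IsFiniteMeasure Q1]
    [IsFiniteMeasure Q2] (h : LikelihoodRatioLE Q1 Q2) {y1 y2 : ℝ} (hy : y1 ≤ y2) :
    Q2 {y1} * Q1 {y2} ≤ Q1 {y1} * Q2 {y2} := by
  obtain ⟨μ, g1, g2, -, hg1, hg2, hmono⟩ := h
  simp only [hg1.measure_singleton, hg2.measure_singleton]
  rcases eq_or_ne (g2 y1 * μ {y1} * (g1 y2 * μ {y2})) 0 with h0 | h0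
  · simp [h0]
  obtain ⟨⟨h21, hμ1⟩, h12, hμ2⟩ : (g2 y1 ≠ 0 ∧ μ {y1} ≠ 0) ∧ g1 y2 ≠ 0 ∧ μ {y2} ≠ 0 := by
    simpa only [mul_ne_zero_iff] using h0
  have hratio := hmono y1 y2 hy ((pos_iff_ne_zero.2 h21).trans_le le_add_self)
    ((pos_iff_ne_zero.2 h12).trans_le le_self_add)
  have hcross : g2 y1 * g1 y2 ≤ g1 y1 * g2 y2 :=
    (ENNReal.div_le_div_iff_mul_le_mul (hg1.ne_top hμ1) (hg2.ne_top hμ2) (hg1.ne_top hμ2)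
      (Or.inr h12)).1 hratio
  calc g2 y1 * μ {y1} * (g1 y2 * μ {y2}) = g2 y1 * g1 y2 * (μ {y1} * μ {y2}) := by ring
    _ ≤ g1 y1 * g2 y2 * (μ {y1} * μ {y2}) := by gcongr
    _ = g1 y1 * μ {y1} * (g2 y2 * μ {y2}) := by ring

theorem likelihoodRatioLE_of_measure_singleton_mul_le {Q1 Q2 : Measure ℝ} [IsFiniteMeasure Q1]
    [IsFiniteMeasure Q2] {T : Set ℝ} (hT : T.Countable) (h1 : Q1 Tᶜ = 0) (h2 : Q2 Tᶜ = 0)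
    (h : ∀ y1 y2 : ℝ, y1 < y2 → Q2 {y1} * Q1 {y2} ≤ Q1 {y1} * Q2 {y2}) :
    LikelihoodRatioLE Q1 Q2 := by
  set μ := Q1 + Q2
  have hQ1 : Q1 ≪ μ := Measure.absolutelyContinuous_of_le (Measure.le_add_right le_rfl)
  have hQ2 : Q2 ≪ μ := Measure.absolutelyContinuous_of_le (Measure.le_add_left le_rfl)
  refine ⟨μ, _, _, inferInstance, isDensity_div_measure_singleton hT h1 hQ1,
    isDensity_div_measure_singleton hT h2 hQ2, ?_⟩
  -- the two densities add up to `μ {z} / μ {z}`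
  have hμ : ∀ z, 0 < Q1 {z} / μ {z} + Q2 {z} / μ {z} → μ {z} ≠ 0 := fun z hz => by
    rw [ENNReal.div_add_div_same] at hz
    exact (ENNReal.div_pos_iff.1 hz).1
  intro y y' hyy' hpos hpos'
  rcases hyy'.eq_or_lt with rfl | hlt
  · exact le_rfl
  have hcd : Q2 {y'} ≠ 0 ∨ Q1 {y'} ≠ 0 := by
    have := hμ y' hpos'
    simp only [μ, Measure.coe_add, Pi.add_apply, ne_eq, add_eq_zero, not_and_or] at this
    tauto
  rw [ENNReal.div_div_div_cancel_right (hμ y hpos) (measure_ne_top μ _),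
    ENNReal.div_div_div_cancel_right (hμ y' hpos') (measure_ne_top μ _),
    ENNReal.div_le_div_iff_mul_le_mul (measure_ne_top _ _) (measure_ne_top _ _)
      (measure_ne_top _ _) hcd]
  exact h y y' hlt

theorem condDist_apply (R : Measure (ℝ × ℝ)) (x : ℝ) {B : Set ℝ} (hB : MeasurableSet B) :
    condDist R x B = (R ({x} ×ˢ univ))⁻¹ * R ({x} ×ˢ B) := by
  rw [condDist, Measure.smul_apply, Measure.map_apply measurable_snd hB,
    Measure.restrict_apply (measurable_snd hB), smul_eq_mul]
  congr 2
  ext ⟨a, b⟩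
  simp [and_comm]

theorem condDist_singleton (R : Measure (ℝ × ℝ)) (x y : ℝ) :
    condDist R x {y} = (R ({x} ×ˢ univ))⁻¹ * R {(x, y)} := by
  rw [condDist_apply R x (measurableSet_singleton y), singleton_prod_singleton]

instance (R : Measure (ℝ × ℝ)) (x : ℝ) : IsFiniteMeasure (condDist R x) :=
  ⟨by
    rw [condDist_apply R x MeasurableSet.univ]
    exact (ENNReal.inv_mul_le_one _).trans_lt ENNReal.one_lt_top⟩

theorem condDist_compl_image_snd (R : Measure (ℝ × ℝ)) (x : ℝ) {S : Set (ℝ × ℝ)}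
    (hS : S.Countable) (hRS : R Sᶜ = 0) : condDist R x (Prod.snd '' S)ᶜ = 0 := by
  have hnull : R ({x} ×ˢ (Prod.snd '' S)ᶜ) = 0 := by
    refine measure_mono_null ?_ hRS
    rintro ⟨a, b⟩ ⟨-, hb⟩ hab
    exact hb ⟨(a, b), hab, rfl⟩
  rw [condDist_apply R x (hS.image _).measurableSet.compl, hnull, mul_zero]

theorem condDist_singleton_mul_le_iff {R : Measure (ℝ × ℝ)} [IsFiniteMeasure R] {x1 x2 : ℝ}
    (h1 : R ({x1} ×ˢ univ) ≠ 0) (h2 : R ({x2} ×ˢ univ) ≠ 0) (y1 y2 : ℝ) :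
    condDist R x2 {y1} * condDist R x1 {y2} ≤ condDist R x1 {y1} * condDist R x2 {y2} ↔
      R {(x2, y1)} * R {(x1, y2)} ≤ R {(x1, y1)} * R {(x2, y2)} := by
  set k := (R ({x1} ×ˢ univ))⁻¹ * (R ({x2} ×ˢ univ))⁻¹
  have hk0 : k ≠ 0 := mul_ne_zero (ENNReal.inv_ne_zero.2 (measure_ne_top _ _))
    (ENNReal.inv_ne_zero.2 (measure_ne_top _ _))
  have hk : k ≠ ∞ := ENNReal.mul_ne_top (ENNReal.inv_ne_top.2 h1) (ENNReal.inv_ne_top.2 h2)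
  have hl : condDist R x2 {y1} * condDist R x1 {y2} = k * (R {(x2, y1)} * R {(x1, y2)}) := by
    simp only [condDist_singleton, k]; ring
  have hr : condDist R x1 {y1} * condDist R x2 {y2} = k * (R {(x1, y1)} * R {(x2, y2)}) := by
    simp only [condDist_singleton, k]; ring
  rw [hl, hr, ENNReal.mul_le_mul_iff_right hk0 hk]

theorem stmt_15 (R : Measure (ℝ × ℝ)) [IsProbabilityMeasure R]
    (hdisc : ∃ S : Set (ℝ × ℝ), S.Countable ∧ R Sᶜ = 0) :
    (∀ x1 x2 : ℝ, x1 < x2 →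
      0 < R ({x1} ×ˢ (univ : Set ℝ)) → 0 < R ({x2} ×ˢ (univ : Set ℝ)) →
      LikelihoodRatioLE (condDist R x1) (condDist R x2)) ↔
    (∀ x1 x2 y1 y2 : ℝ, x1 < x2 → y1 < y2 →
      R {(x2, y1)} * R {(x1, y2)} ≤ R {(x1, y1)} * R {(x2, y2)}) := by
  obtain ⟨S, hS, hRS⟩ := hdisc
  have hfiber : ∀ x y, R ({x} ×ˢ univ) = 0 → R {(x, y)} = 0 := fun x y h =>
    measure_mono_null (by simp) h
  constructor
  · intro hlr x1 x2 y1 y2 hx hy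
    rcases eq_or_ne (R ({x1} ×ˢ univ)) 0 with h1 | h1
    · simp [hfiber x1 y2 h1]
    rcases eq_or_ne (R ({x2} ×ˢ univ)) 0 with h2 | h2
    · simp [hfiber x2 y1 h2]
    have hlr12 := hlr x1 x2 hx (pos_iff_ne_zero.2 h1) (pos_iff_ne_zero.2 h2)
    exact (condDist_singleton_mul_le_iff h1 h2 y1 y2).1 (hlr12.measure_singleton_mul_le hy.le)
  · intro htp x1 x2 hx hc1 hc2
    exact likelihoodRatioLE_of_measure_singleton_mul_le (hS.image Prod.snd)
      (condDist_compl_image_snd R x1 hS hRS) (condDist_compl_image_snd R x2 hS hRS)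
      fun y1 y2 hy => (condDist_singleton_mul_le_iff hc1.ne' hc2.ne' y1 y2).2
        (htp x1 x2 y1 y2 hx hy)
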